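/- arXiv:1505.07692 — 3 statements merged into one kernel-verified Lean document; each statement's English description precedes it below -/
import Mathlib

section
/- Let n ≥ 5 and let v : ℝ^n → ℝ be defined by v(y) = (1 + |y|^2/4)^{-(n-4)/2}. Then v satisfies Δ²v = ((n-4)/2) · Q̄ · v^{(n+4)/(n-4)} on ℝ^n, where Q̄ = n(n²-4)/8 and Δ² is the Euclidean bilaplacian. -/
/-!
Write `v = f_p` with `f_p(y) = (1 + |y|²/4)^p` (`bubblePow n p`) and `p = 2 - n/2`. Since
`∂ᵢ∂ᵢ f_p` is explicit, the Laplacian maps `f_p` to a combination of `f_{p-1}` and `f_{p-2}`;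
iterating, `Δ² f_p` is a combination of `f_{p-2}`, `f_{p-3}`, `f_{p-4}`, whose first two
coefficients carry the factors `p - 2 + n/2` and `2p + n - 4`, both zero at `p = 2 - n/2`.
The last coefficient `p(p-1)(p-2)(p-3)` equals `(n-4)/2 · n(n²-4)/8` there, and
`f_p^{(n+4)/(n-4)} = f_{p-4}`.
-/

open scoped RealInnerProductSpace

/-- The Euclidean Laplacian of a real-valued function on `ℝⁿ`. -/
noncomputable def laplacian {n : ℕ} (f : EuclideanSpace ℝ (Fin n) → ℝ)
    (x : EuclideanSpace ℝ (Fin n)) : ℝ :=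
  ∑ i : Fin n, iteratedFDeriv ℝ 2 f x ![EuclideanSpace.single i 1, EuclideanSpace.single i 1]

section Laplacian

variable {n : ℕ} {f g : EuclideanSpace ℝ (Fin n) → ℝ} {x : EuclideanSpace ℝ (Fin n)}

theorem laplacian_add (hf : ContDiffAt ℝ 2 f x) (hg : ContDiffAt ℝ 2 g x) :
    laplacian (f + g) x = laplacian f x + laplacian g x := by
  simp only [laplacian, iteratedFDeriv_add_apply hf hg, add_apply, Finset.sum_add_distrib]

theorem laplacian_const_smul (c : ℝ) (hf : ContDiffAt ℝ 2 f x) :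
    laplacian (c • f) x = c * laplacian f x := by
  simp only [laplacian, iteratedFDeriv_const_smul_apply hf, smul_apply, smul_eq_mul,
    Finset.mul_sum]

end Laplacian

noncomputable def bubblePow (n : ℕ) (p : ℝ) (y : EuclideanSpace ℝ (Fin n)) : ℝ :=
  (1 + ‖y‖ ^ 2 / 4) ^ p

namespace bubblePow

variable {n : ℕ}

theorem base_pos (y : EuclideanSpace ℝ (Fin n)) : 0 < 1 + ‖y‖ ^ 2 / 4 := by positivity

theorem contDiff (p : ℝ) {m : WithTop ℕ∞} : ContDiff ℝ m (bubblePow n p) := by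
  have hbase : ContDiff ℝ m (fun y : EuclideanSpace ℝ (Fin n) => 1 + ‖y‖ ^ 2 / 4) :=
    contDiff_const.add ((contDiff_norm_sq ℝ).div_const 4)
  refine contDiff_iff_contDiffAt.2 fun y => ?_
  exact (Real.contDiffAt_rpow_const_of_ne (base_pos y).ne').comp y hbase.contDiffAt

theorem hasFDerivAt (p : ℝ) (x : EuclideanSpace ℝ (Fin n)) :
    HasFDerivAt (bubblePow n p) ((p / 2 * bubblePow n (p - 1) x) • innerSL ℝ x) x := by
  have hbase : HasFDerivAt (fun y : EuclideanSpace ℝ (Fin n) => 1 + ‖y‖ ^ 2 / 4)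
      ((4 : ℝ)⁻¹ • 2 • innerSL ℝ x) x :=
    (((hasStrictFDerivAt_norm_sq x).hasFDerivAt.const_smul (4 : ℝ)⁻¹).const_add 1)
      |>.congr_of_eventuallyEq (.of_forall fun y => by simp [div_eq_inv_mul])
  refine ((Real.hasDerivAt_rpow_const (Or.inl (base_pos x).ne')).comp_hasFDerivAt x
    hbase).congr_fderiv ?_
  ext w
  simp [bubblePow, smul_eq_mul]
  ring

theorem fderiv_eq (p : ℝ) :
    fderiv ℝ (bubblePow n p) = fun x => (p / 2 * bubblePow n (p - 1) x) • innerSL ℝ x :=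
  funext fun x => (hasFDerivAt p x).fderiv

theorem iteratedFDeriv_two_single (p : ℝ) (x : EuclideanSpace ℝ (Fin n)) (i : Fin n) :
    iteratedFDeriv ℝ 2 (bubblePow n p) x ![EuclideanSpace.single i 1, EuclideanSpace.single i 1]
      = p / 2 * ((p - 1) / 2) * bubblePow n (p - 2) x * x i ^ 2
        + p / 2 * bubblePow n (p - 1) x := by
  set e : EuclideanSpace ℝ (Fin n) := EuclideanSpace.single i 1
  have hpartial : (fun y => fderiv ℝ (bubblePow n p) y e)
      = fun y => p / 2 * bubblePow n (p - 1) y * EuclideanSpace.proj i y := by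
    funext y
    simp [e, fderiv_eq, innerSL_apply_apply, EuclideanSpace.inner_single_right]
  have hdiff : DifferentiableAt ℝ (fderiv ℝ (bubblePow n p)) x :=
    ((contDiff p (m := 2)).fderiv_right one_add_one_eq_two.le).differentiable one_ne_zero x
  have hsecond := ((hasFDerivAt (p - 1) x).const_mul (p / 2)).fun_mul
    (EuclideanSpace.proj i).hasFDerivAt
  have hswap : fderiv ℝ (fderiv ℝ (bubblePow n p)) x e e
      = fderiv ℝ (fun y => fderiv ℝ (bubblePow n p) y e) x e := by
    simp [fderiv_clm_apply hdiff (differentiableAt_const e)]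
  rw [iteratedFDeriv_two_apply]
  simp only [Matrix.cons_val_zero, Matrix.cons_val_one]
  rw [hswap, hpartial, hsecond.fderiv]
  simp [e, innerSL_apply_apply, EuclideanSpace.inner_single_right,
    show p - 1 - 1 = p - 2 by ring]
  ring

theorem add_one (p : ℝ) (x : EuclideanSpace ℝ (Fin n)) :
    bubblePow n (p + 1) x = bubblePow n p x * (1 + ‖x‖ ^ 2 / 4) :=
  Real.rpow_add_one (base_pos x).ne' p

theorem rpow (p q : ℝ) (x : EuclideanSpace ℝ (Fin n)) :
    bubblePow n p x ^ q = bubblePow n (p * q) x :=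
  (Real.rpow_mul (base_pos x).le p q).symm

theorem laplacian_eq (p : ℝ) :
    laplacian (bubblePow n p)
      = (p * (p - 1 + n / 2)) • bubblePow n (p - 1) + (-(p * (p - 1))) • bubblePow n (p - 2) := by
  funext x
  have hsum : ∑ i, x i ^ 2 = ‖x‖ ^ 2 := by
    simp [EuclideanSpace.norm_sq_eq]
  have hshift := add_one (p - 2) x
  rw [show p - 2 + 1 = p - 1 by ring] at hshift
  simp only [laplacian, iteratedFDeriv_two_single, Finset.sum_add_distrib, ← Finset.mul_sum, hsum,
    Finset.sum_const, Finset.card_univ, Fintype.card_fin, nsmul_eq_mul, Pi.add_apply,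
    Pi.smul_apply, smul_eq_mul, hshift]
  ring

theorem laplacian_laplacian_eq (p : ℝ) :
    laplacian (laplacian (bubblePow n p))
      = (p * (p - 1) * (p - 1 + n / 2) * (p - 2 + n / 2)) • bubblePow n (p - 2)
        + (-(p * (p - 1) * (p - 2) * (2 * p + n - 4))) • bubblePow n (p - 3)
        + (p * (p - 1) * (p - 2) * (p - 3)) • bubblePow n (p - 4) := by
  funext x
  have hC2 {q : ℝ} {c : ℝ} : ContDiffAt ℝ 2 (c • bubblePow n q) x :=
    ((contDiff q).const_smul c).contDiffAt
  rw [laplacian_eq p, laplacian_add hC2 hC2, laplacian_const_smul _ (contDiff _).contDiffAt,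
    laplacian_const_smul _ (contDiff _).contDiffAt, laplacian_eq, laplacian_eq]
  norm_num only [sub_sub, Pi.add_apply, Pi.smul_apply, smul_eq_mul]
  ring

end bubblePow

theorem stmt_5 (n : ℕ) (hn : 5 ≤ n)
    (v : EuclideanSpace ℝ (Fin n) → ℝ)
    (hv : ∀ y, v y = (1 + ‖y‖ ^ 2 / 4) ^ (-(((n : ℝ) - 4) / 2))) :
    ∀ y, laplacian (laplacian v) y
      = (((n : ℝ) - 4) / 2) * ((n : ℝ) * ((n : ℝ) ^ 2 - 4) / 8)
          * (v y) ^ (((n : ℝ) + 4) / ((n : ℝ) - 4)) := by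
  intro y
  have hn4 : (n : ℝ) - 4 ≠ 0 := by
    have : (5 : ℝ) ≤ n := by exact_mod_cast hn
    linarith
  have hv_eq : v = bubblePow n (-(((n : ℝ) - 4) / 2)) := funext hv
  have hexp : -(((n : ℝ) - 4) / 2) * (((n : ℝ) + 4) / ((n : ℝ) - 4))
      = -(((n : ℝ) - 4) / 2) - 4 := by
    field_simp
    ring
  rw [hv_eq, bubblePow.laplacian_laplacian_eq, bubblePow.rpow, hexp]
  simp only [Pi.add_apply, Pi.smul_apply, smul_eq_mul]
  ring
end

section
/- Let Ω ⊂ ℝ^n be a bounded domain with smooth boundary and u ∈ C^4(Ω̄). Then ∫_Ω (x·∇u + ((n-4)/2) u) Δ²u dx = ∫_{∂Ω} [ ((n-4)/2)(u ∂_ν(Δu) − Δu ∂_ν u) + (x·∇u) ∂_ν(Δu) − ∂_ν(x·∇u) Δu + (1/2)(Δu)^2 (x·ν) ] ds, where ν is the outward unit normal. -/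
/-!
With `k = (n - 4) / 2`, the integrand is the divergence of
`k (u ∇Δu - Δu ∇u) + (x·∇u) ∇Δu - Δu ∇(x·∇u) + ½ (Δu)² x`.
Both Green fields `f ∇g - g ∇f` have divergence `f Δg - g Δf`, and `Δ(x·∇u) = x·∇Δu + 2 Δu`
by the symmetry of third derivatives; since `div ((Δu)² x / 2) = Δu x·∇Δu + (n / 2) (Δu)²`,
all `(Δu)²` terms cancel exactly for this value of `k`. The divergence theorem then gives
the boundary integral.
-/

open scoped RealInnerProductSpace
open MeasureTheory

/-- The Euclidean divergence of a vector field on `ℝⁿ`. -/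
noncomputable def diverg {n : ℕ} (F : EuclideanSpace ℝ (Fin n) → EuclideanSpace ℝ (Fin n))
    (x : EuclideanSpace ℝ (Fin n)) : ℝ :=
  ∑ i : Fin n, fderiv ℝ F x (EuclideanSpace.single i 1) i

section Gradient

variable {H : Type*} [NormedAddCommGroup H] [InnerProductSpace ℝ H] [CompleteSpace H]
  {f : H → ℝ}

theorem ContDiff.gradient {m k : WithTop ℕ∞} (hf : ContDiff ℝ m f) (hk : k + 1 ≤ m) :
    ContDiff ℝ k (gradient f) :=
  (InnerProductSpace.toDual ℝ H).symm.contDiff.comp (hf.fderiv_right hk)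

theorem inner_fderiv_gradient_apply (x v w : H) :
    ⟪fderiv ℝ (gradient f) x v, w⟫ = fderiv ℝ (fderiv ℝ f) x v w := by
  have : gradient f = (InnerProductSpace.toDual ℝ H).symm ∘ fderiv ℝ f := rfl
  rw [this, LinearIsometryEquiv.comp_fderiv]
  exact InnerProductSpace.toDual_symm_apply

end Gradient

section ThirdDerivative

variable {E F G : Type*} [NormedAddCommGroup E] [NormedSpace ℝ E] [NormedAddCommGroup F]
  [NormedSpace ℝ F] [NormedAddCommGroup G] [NormedSpace ℝ G]

theorem fderiv_apply_const_apply {A : E → F →L[ℝ] G} {x : E} (hA : DifferentiableAt ℝ A x)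
    (v : E) (w : F) : fderiv ℝ (fun y => A y w) x v = fderiv ℝ A x v w := by
  simp [fderiv_clm_apply hA (differentiableAt_const w)]

theorem fderiv_fderiv_fderiv_apply_rotate {u : E → F} (hu : ContDiff ℝ 3 u) (x a b c : E) :
    fderiv ℝ (fderiv ℝ (fderiv ℝ u)) x a b c = fderiv ℝ (fderiv ℝ (fderiv ℝ u)) x c a b := by
  have hD2 : Differentiable ℝ (fderiv ℝ (fderiv ℝ u)) :=
    ((hu.fderiv_right (m := 2) (by norm_num)).fderiv_right (m := 1) (by norm_num)).differentiable
      (by norm_num)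
  have hD2bc : ∀ b, Differentiable ℝ (fun y => fderiv ℝ (fderiv ℝ u) y b) := fun b y =>
    (hD2 y).clm_apply (differentiableAt_const b)
  have swap_last : ∀ a b c, fderiv ℝ (fderiv ℝ (fderiv ℝ u)) x a b c
      = fderiv ℝ (fderiv ℝ (fderiv ℝ u)) x a c b := by
    intro a b c
    have hsymm : (fun y => fderiv ℝ (fderiv ℝ u) y b c) = fun y => fderiv ℝ (fderiv ℝ u) y c b :=
      funext fun y => (hu.contDiffAt.isSymmSndFDerivAt (by simp; norm_num)).eq b c
    rw [← fderiv_apply_const_apply (hD2 x), ← fderiv_apply_const_apply (hD2bc b x), hsymm,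
      fderiv_apply_const_apply (hD2bc c x), fderiv_apply_const_apply (hD2 x)]
  have swap_first : ∀ a b, fderiv ℝ (fderiv ℝ (fderiv ℝ u)) x a b
      = fderiv ℝ (fderiv ℝ (fderiv ℝ u)) x b a :=
    ((hu.fderiv_right (m := 2) (by norm_num)).contDiffAt.isSymmSndFDerivAt (by simp)).eq
  rw [swap_last, swap_first]

theorem fderiv_fderiv_fun_fderiv_apply_self {u : E → F} (hu : ContDiff ℝ 3 u) (x v : E) :
    fderiv ℝ (fderiv ℝ (fun y => fderiv ℝ u y y)) x v v
      = (2 : ℝ) • fderiv ℝ (fderiv ℝ u) x v v + fderiv ℝ (fderiv ℝ (fderiv ℝ u)) x v v x := by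
  have hD1 : ContDiff ℝ 2 (fderiv ℝ u) := hu.fderiv_right (by norm_num)
  have hD2 : ContDiff ℝ 1 (fderiv ℝ (fderiv ℝ u)) := hD1.fderiv_right (by norm_num)
  have hD2v : ∀ w, Differentiable ℝ (fun y => fderiv ℝ (fderiv ℝ u) y w) := fun w =>
    (hD2.clm_apply contDiff_const).differentiable one_ne_zero
  have hD1v : Differentiable ℝ (fun y => fderiv ℝ u y v) :=
    (hD1.clm_apply contDiff_const).differentiable (by norm_num)
  have first_deriv : (fun y => fderiv ℝ (fun z => fderiv ℝ u z z) y v)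
      = fun y => fderiv ℝ u y v + fderiv ℝ (fderiv ℝ u) y v y := by
    funext y
    simp [fderiv_clm_apply (hD1.differentiable (by norm_num) y) differentiableAt_fun_id]
  have hg : DifferentiableAt ℝ (fderiv ℝ (fun y => fderiv ℝ u y y)) x :=
    ((hD1.clm_apply contDiff_id).fderiv_right (m := 1) (by norm_num)).differentiable one_ne_zero x
  rw [← fderiv_apply_const_apply hg, first_deriv,
    fderiv_fun_add (hD1v x) ((hD2v v x).clm_apply differentiableAt_fun_id),
    fderiv_clm_apply (hD2v v x) differentiableAt_fun_id]
  simp only [fderiv_fun_id, ContinuousLinearMap.comp_id, add_apply,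
    ContinuousLinearMap.flip_apply, fderiv_apply_const_apply (hD1.differentiable (by norm_num) x),
    fderiv_apply_const_apply (hD2.differentiable one_ne_zero x), two_smul]
  abel

end ThirdDerivative

section Euclidean

variable {n : ℕ}

theorem ContinuousLinearMap.apply_eq_sum_single {M : Type*} [AddCommGroup M] [Module ℝ M]
    [TopologicalSpace M] (L : EuclideanSpace ℝ (Fin n) →L[ℝ] M) (v : EuclideanSpace ℝ (Fin n)) :
    L v = ∑ i, v i • L (EuclideanSpace.single i 1) := by
  conv_lhs => rw [← (EuclideanSpace.basisFun (Fin n) ℝ).sum_repr v]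
  simp

theorem laplacian_eq_sum_fderiv_fderiv (f : EuclideanSpace ℝ (Fin n) → ℝ)
    (x : EuclideanSpace ℝ (Fin n)) :
    laplacian f x = ∑ i, fderiv ℝ (fderiv ℝ f) x (EuclideanSpace.single i 1)
      (EuclideanSpace.single i 1) := by
  simp [laplacian, iteratedFDeriv_two_apply]

theorem ContDiff.laplacian {f : EuclideanSpace ℝ (Fin n) → ℝ} {m k : WithTop ℕ∞}
    (hf : ContDiff ℝ m f) (hk : k + 2 ≤ m) : ContDiff ℝ k (laplacian f) := by
  simp only [funext (laplacian_eq_sum_fderiv_fderiv f)]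
  have : ContDiff ℝ k (fderiv ℝ (fderiv ℝ f)) :=
    (hf.fderiv_right (m := k + 1) (by rw [add_assoc]; exact hk)).fderiv_right le_rfl
  fun_prop

theorem diverg_add {F G : EuclideanSpace ℝ (Fin n) → EuclideanSpace ℝ (Fin n)}
    {x : EuclideanSpace ℝ (Fin n)} (hF : DifferentiableAt ℝ F x) (hG : DifferentiableAt ℝ G x) :
    diverg (F + G) x = diverg F x + diverg G x := by
  simp [diverg, fderiv_add hF hG, Finset.sum_add_distrib]

theorem diverg_sub {F G : EuclideanSpace ℝ (Fin n) → EuclideanSpace ℝ (Fin n)}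
    {x : EuclideanSpace ℝ (Fin n)} (hF : DifferentiableAt ℝ F x) (hG : DifferentiableAt ℝ G x) :
    diverg (F - G) x = diverg F x - diverg G x := by
  simp [diverg, fderiv_sub hF hG, Finset.sum_sub_distrib]

theorem diverg_const_smul (c : ℝ) (F : EuclideanSpace ℝ (Fin n) → EuclideanSpace ℝ (Fin n))
    (x : EuclideanSpace ℝ (Fin n)) :
    diverg (c • F) x = c * diverg F x := by
  simp [diverg, fderiv_const_smul_field, Finset.mul_sum]

theorem diverg_smul {φ : EuclideanSpace ℝ (Fin n) → ℝ}
    {G : EuclideanSpace ℝ (Fin n) → EuclideanSpace ℝ (Fin n)}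
    {x : EuclideanSpace ℝ (Fin n)} (hφ : DifferentiableAt ℝ φ x) (hG : DifferentiableAt ℝ G x) :
    diverg (φ • G) x = fderiv ℝ φ x (G x) + φ x * diverg G x := by
  rw [(fderiv ℝ φ x).apply_eq_sum_single]
  simp [diverg, fderiv_smul hφ hG, Finset.sum_add_distrib, Finset.mul_sum, mul_comm, add_comm]

theorem diverg_id (x : EuclideanSpace ℝ (Fin n)) : diverg id x = n := by
  simp [diverg]

theorem diverg_gradient {f : EuclideanSpace ℝ (Fin n) → ℝ} {x : EuclideanSpace ℝ (Fin n)} :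
    diverg (gradient f) x = laplacian f x := by
  simp only [diverg, laplacian_eq_sum_fderiv_fderiv]
  refine Finset.sum_congr rfl fun i _ => ?_
  rw [← inner_fderiv_gradient_apply, EuclideanSpace.inner_single_right]
  simp

theorem fderiv_laplacian_apply {u : EuclideanSpace ℝ (Fin n) → ℝ} {x : EuclideanSpace ℝ (Fin n)}
    (hu : DifferentiableAt ℝ (fderiv ℝ (fderiv ℝ u)) x) (v : EuclideanSpace ℝ (Fin n)) :
    fderiv ℝ (laplacian u) x v = ∑ i, fderiv ℝ (fderiv ℝ (fderiv ℝ u)) x v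
      (EuclideanSpace.single i 1) (EuclideanSpace.single i 1) := by
  have hdiff : ∀ a, DifferentiableAt ℝ (fun y => fderiv ℝ (fderiv ℝ u) y a) x := fun a =>
    hu.clm_apply (differentiableAt_const a)
  simp only [funext (laplacian_eq_sum_fderiv_fderiv u)]
  rw [fderiv_fun_sum fun i _ => (hdiff _).clm_apply (differentiableAt_const _)]
  simp only [FunLike.coe_sum, Finset.sum_apply, fderiv_apply_const_apply (hdiff _),
    fderiv_apply_const_apply hu]

theorem laplacian_fun_fderiv_apply_self {u : EuclideanSpace ℝ (Fin n) → ℝ} (hu : ContDiff ℝ 3 u)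
    (x : EuclideanSpace ℝ (Fin n)) :
    laplacian (fun y => fderiv ℝ u y y) x = fderiv ℝ (laplacian u) x x + 2 * laplacian u x := by
  have hD2 : Differentiable ℝ (fderiv ℝ (fderiv ℝ u)) :=
    ((hu.fderiv_right (m := 2) (by norm_num)).fderiv_right (m := 1) (by norm_num)).differentiable
      (by norm_num)
  simp only [laplacian_eq_sum_fderiv_fderiv, fderiv_fderiv_fun_fderiv_apply_self hu,
    fderiv_laplacian_apply (hD2 x), smul_eq_mul, Finset.sum_add_distrib, Finset.mul_sum]
  rw [add_comm]
  congr 1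
  exact Finset.sum_congr rfl fun i _ => fderiv_fderiv_fderiv_apply_rotate hu x _ _ x

end Euclidean

section Pohozaev

variable {n : ℕ}

noncomputable def greenField (f g : EuclideanSpace ℝ (Fin n) → ℝ) :
    EuclideanSpace ℝ (Fin n) → EuclideanSpace ℝ (Fin n) :=
  f • gradient g - g • gradient f

theorem ContDiff.greenField {f g : EuclideanSpace ℝ (Fin n) → ℝ} {m k : WithTop ℕ∞}
    (hf : ContDiff ℝ m f) (hg : ContDiff ℝ m g) (hk : k + 1 ≤ m) :
    ContDiff ℝ k (greenField f g) :=
  ((hf.of_le (le_self_add.trans hk)).smul (hg.gradient hk)).sub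
    ((hg.of_le (le_self_add.trans hk)).smul (hf.gradient hk))

theorem diverg_greenField {f g : EuclideanSpace ℝ (Fin n) → ℝ} (hf : ContDiff ℝ 2 f)
    (hg : ContDiff ℝ 2 g) (x : EuclideanSpace ℝ (Fin n)) :
    diverg (greenField f g) x = f x * laplacian g x - g x * laplacian f x := by
  have hdf : Differentiable ℝ f := hf.differentiable (by norm_num)
  have hdg : Differentiable ℝ g := hg.differentiable (by norm_num)
  have hdgrad : ∀ {h : EuclideanSpace ℝ (Fin n) → ℝ}, ContDiff ℝ 2 h →
      Differentiable ℝ (gradient h) := fun hh =>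
    (hh.gradient (k := 1) (by norm_num)).differentiable one_ne_zero
  have hsymm : fderiv ℝ f x (gradient g x) = fderiv ℝ g x (gradient f x) := by
    rw [← inner_gradient_left, ← inner_gradient_left, real_inner_comm]
  rw [greenField, diverg_sub ((hdf x).smul (hdgrad hg x)) ((hdg x).smul (hdgrad hf x)),
    diverg_smul (hdf x) (hdgrad hg x), diverg_smul (hdg x) (hdgrad hf x), diverg_gradient,
    diverg_gradient, hsymm]
  ring

noncomputable def pohozaevField (u : EuclideanSpace ℝ (Fin n) → ℝ) :
    EuclideanSpace ℝ (Fin n) → EuclideanSpace ℝ (Fin n) :=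
  (((n : ℝ) - 4) / 2) • greenField u (laplacian u)
    + greenField (fun z => ⟪z, gradient u z⟫) (laplacian u)
    + (fun y => (1 / 2) * laplacian u y ^ 2) • id

theorem contDiff_pohozaevField {u : EuclideanSpace ℝ (Fin n) → ℝ} (hu : ContDiff ℝ 4 u) :
    ContDiff ℝ 1 (pohozaevField u) := by
  have hΔ : ContDiff ℝ 2 (laplacian u) := hu.laplacian (by norm_num)
  have hxg : ContDiff ℝ 2 (fun z => ⟪z, gradient u z⟫) :=
    contDiff_id.inner ℝ (hu.gradient (by norm_num))
  have hsq : ContDiff ℝ 1 (fun y => (1 / 2 : ℝ) * laplacian u y ^ 2) :=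
    (contDiff_const.mul (hΔ.pow 2)).of_le (by norm_num)
  have hgreen_u : ContDiff ℝ 1 (greenField u (laplacian u)) :=
    (hu.of_le (by norm_num)).greenField hΔ (by norm_num)
  have hgreen_xg : ContDiff ℝ 1 (greenField (fun z => ⟪z, gradient u z⟫) (laplacian u)) :=
    hxg.greenField hΔ (by norm_num)
  exact ((hgreen_u.const_smul (((n : ℝ) - 4) / 2)).add hgreen_xg).add (hsq.smul contDiff_id)

theorem diverg_pohozaevField {u : EuclideanSpace ℝ (Fin n) → ℝ} (hu : ContDiff ℝ 4 u)
    (x : EuclideanSpace ℝ (Fin n)) :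
    diverg (pohozaevField u) x
      = (⟪x, gradient u x⟫ + (((n : ℝ) - 4) / 2) * u x) * laplacian (laplacian u) x := by
  have hΔ : ContDiff ℝ 2 (laplacian u) := hu.laplacian (by norm_num)
  have hdΔ : Differentiable ℝ (laplacian u) := hΔ.differentiable (by norm_num)
  have hxg : ContDiff ℝ 2 (fun z => fderiv ℝ u z z) :=
    (hu.fderiv_right (m := 3) (by norm_num)).clm_apply contDiff_id |>.of_le (by norm_num)
  have hsq : DifferentiableAt ℝ (fun y => (1 / 2 : ℝ) * laplacian u y ^ 2) x :=
    ((hdΔ x).pow 2).const_mul _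
  have hsq_deriv : fderiv ℝ (fun y => (1 / 2 : ℝ) * laplacian u y ^ 2) x x
      = laplacian u x * fderiv ℝ (laplacian u) x x := by
    have hpow : DifferentiableAt ℝ (fun y => laplacian u y ^ 2) x := (hdΔ x).pow 2
    rw [fderiv_const_mul hpow, fderiv_fun_pow 2 (hdΔ x)]
    simp only [FunLike.coe_smul, Pi.smul_apply, smul_eq_mul]
    ring
  have hgreen_u : DifferentiableAt ℝ (greenField u (laplacian u)) x :=
    ((hu.of_le (by norm_num)).greenField hΔ (k := 1) (by norm_num)).differentiable one_ne_zero x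
  have hgreen_xg : DifferentiableAt ℝ (greenField (fun z => fderiv ℝ u z z) (laplacian u)) x :=
    (hxg.greenField hΔ (k := 1) (by norm_num)).differentiable one_ne_zero x
  have hxg_eq : (fun z => ⟪z, gradient u z⟫) = fun z => fderiv ℝ u z z :=
    funext fun z => by simp
  rw [pohozaevField, hxg_eq,
    diverg_add ((hgreen_u.const_smul _).add hgreen_xg) (hsq.smul differentiableAt_id),
    diverg_add (hgreen_u.const_smul _) hgreen_xg, diverg_const_smul,
    diverg_greenField (hu.of_le (by norm_num)) hΔ, diverg_greenField hxg hΔ,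
    diverg_smul hsq differentiableAt_id, diverg_id, id, hsq_deriv,
    laplacian_fun_fderiv_apply_self (hu.of_le (by norm_num))]
  simp only [inner_gradient_right, conj_trivial]
  ring

theorem inner_pohozaevField (u : EuclideanSpace ℝ (Fin n) → ℝ) (x v : EuclideanSpace ℝ (Fin n)) :
    ⟪pohozaevField u x, v⟫
      = (((n : ℝ) - 4) / 2) * (u x * fderiv ℝ (laplacian u) x v - laplacian u x * fderiv ℝ u x v)
        + ⟪x, gradient u x⟫ * fderiv ℝ (laplacian u) x v
        - fderiv ℝ (fun z => ⟪z, gradient u z⟫) x v * laplacian u x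
        + (1 / 2) * laplacian u x ^ 2 * ⟪x, v⟫ := by
  simp only [pohozaevField, greenField, Pi.add_apply, Pi.sub_apply, Pi.smul_apply,
    Pi.smul_apply', id, inner_add_left, inner_sub_left, real_inner_smul_left, inner_gradient_left]
  ring

end Pohozaev

theorem stmt_8_general (n : ℕ)
    (Ω : Set (EuclideanSpace ℝ (Fin n)))
    (σ : Measure (EuclideanSpace ℝ (Fin n)))
    (ν : EuclideanSpace ℝ (Fin n) → EuclideanSpace ℝ (Fin n))
    (hdiv : ∀ F : EuclideanSpace ℝ (Fin n) → EuclideanSpace ℝ (Fin n), ContDiff ℝ 1 F →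
      ∫ x in Ω, diverg F x = ∫ x in frontier Ω, ⟪F x, ν x⟫ ∂σ)
    (u : EuclideanSpace ℝ (Fin n) → ℝ) (hu : ContDiff ℝ 4 u) :
    ∫ x in Ω, (⟪x, gradient u x⟫ + (((n : ℝ) - 4) / 2) * u x) * laplacian (laplacian u) x
      = ∫ x in frontier Ω,
          ((((n : ℝ) - 4) / 2) * (u x * fderiv ℝ (laplacian u) x (ν x)
              - laplacian u x * fderiv ℝ u x (ν x))
            + ⟪x, gradient u x⟫ * fderiv ℝ (laplacian u) x (ν x)
            - fderiv ℝ (fun z => ⟪z, gradient u z⟫) x (ν x) * laplacian u x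
            + (1 / 2) * (laplacian u x) ^ 2 * ⟪x, ν x⟫) ∂σ := by
  calc _ = ∫ x in Ω, diverg (pohozaevField u) x := by simp_rw [diverg_pohozaevField hu]
    _ = ∫ x in frontier Ω, ⟪pohozaevField u x, ν x⟫ ∂σ := hdiv _ (contDiff_pohozaevField hu)
    _ = _ := by simp_rw [inner_pohozaevField]

/-- Pohozaev-type identity on a bounded domain `Ω` with smooth boundary.  The smooth boundary
structure is encoded by a surface measure `σ` on `frontier Ω` and an outward unit normal field
`ν` for which the divergence theorem holds for `C¹` vector fields. -/
theorem stmt_8 (n : ℕ) (hn : 5 ≤ n)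
    (Ω : Set (EuclideanSpace ℝ (Fin n))) (hΩopen : IsOpen Ω)
    (hΩbdd : Bornology.IsBounded Ω)
    (σ : Measure (EuclideanSpace ℝ (Fin n)))
    (ν : EuclideanSpace ℝ (Fin n) → EuclideanSpace ℝ (Fin n))
    (hν : ∀ x ∈ frontier Ω, ‖ν x‖ = 1)
    (hdiv : ∀ F : EuclideanSpace ℝ (Fin n) → EuclideanSpace ℝ (Fin n), ContDiff ℝ 1 F →
      ∫ x in Ω, diverg F x = ∫ x in frontier Ω, ⟪F x, ν x⟫ ∂σ)
    (u : EuclideanSpace ℝ (Fin n) → ℝ) (hu : ContDiff ℝ 4 u) :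
    ∫ x in Ω, (⟪x, gradient u x⟫ + (((n : ℝ) - 4) / 2) * u x) * laplacian (laplacian u) x
      = ∫ x in frontier Ω,
          ((((n : ℝ) - 4) / 2) * (u x * fderiv ℝ (laplacian u) x (ν x)
              - laplacian u x * fderiv ℝ u x (ν x))
            + ⟪x, gradient u x⟫ * fderiv ℝ (laplacian u) x (ν x)
            - fderiv ℝ (fun z => ⟪z, gradient u z⟫) x (ν x) * laplacian u x
            + (1 / 2) * (laplacian u x) ^ 2 * ⟪x, ν x⟫) ∂σ :=
  stmt_8_general n Ω σ ν hdiv u hu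
end

section
/- Let (M, g) be a closed Riemannian manifold of dimension n ≥ 5 with scalar curvature R_g ≥ 0 and Q-curvature Q_g ≥ 0 on M. Suppose u ∈ C^4(M) is positive and the metric g̃ = u^{4/(n-4)} g has Q-curvature Q_{g̃} ≥ 0, and suppose u_λ = (1-λ) + λ u > 0 on M for some λ ∈ [0,1]. Then the metric g_λ = u_λ^{4/(n-4)} g has Q-curvature Q_{g_λ} ≥ 0. -/
/-- Conformal covariance of the `Q`-curvature.  Here `M` is the underlying set of a closed
Riemannian manifold `(M, g)` of dimension `n ≥ 5`, `P` is the Paneitz operator of `g` (a linear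
operator on functions), `R` is the scalar curvature and `Q` the `Q`-curvature of `g`, related to
`P` by `P 1 = ((n-4)/2) Q`.  For a positive conformal factor `w`, the `Q`-curvature of
`w^{4/(n-4)} g` is the function `Q_w` determined by `P w = ((n-4)/2) Q_w w^{(n+4)/(n-4)}`.
If `R ≥ 0`, `Q ≥ 0`, the metric `u^{4/(n-4)} g` has nonnegative `Q`-curvature, and
`u_λ = (1-λ) + λ u > 0`, then `u_λ^{4/(n-4)} g` has nonnegative `Q`-curvature. -/
theorem stmt_14 (M : Type*) (n : ℕ) (hn : 5 ≤ n)
    (P : (M → ℝ) →ₗ[ℝ] (M → ℝ)) (R Q : M → ℝ)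
    (hR : ∀ x, 0 ≤ R x) (hQ : ∀ x, 0 ≤ Q x)
    (hP1 : ∀ x, P (fun _ => 1) x = (((n : ℝ) - 4) / 2) * Q x)
    (u : M → ℝ) (hu : ∀ x, 0 < u x)
    (Qtilde : M → ℝ) (hQtilde : ∀ x, 0 ≤ Qtilde x)
    (hPu : ∀ x, P u x
      = (((n : ℝ) - 4) / 2) * Qtilde x * (u x) ^ (((n : ℝ) + 4) / ((n : ℝ) - 4)))
    (lam : ℝ) (hlam : lam ∈ Set.Icc (0 : ℝ) 1)
    (ulam : M → ℝ) (hulam : ∀ x, ulam x = (1 - lam) + lam * u x)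
    (hulampos : ∀ x, 0 < ulam x)
    (Qlam : M → ℝ)
    (hPulam : ∀ x, P ulam x
      = (((n : ℝ) - 4) / 2) * Qlam x * (ulam x) ^ (((n : ℝ) + 4) / ((n : ℝ) - 4))) :
    ∀ x, 0 ≤ Qlam x := by
  intro x
  have hc : (0:ℝ) < ((n : ℝ) - 4) / 2 := by
    have : (5:ℝ) ≤ n := by exact_mod_cast hn
    linarith
  have hfun : ulam = (1 - lam) • (fun _ : M => (1:ℝ)) + lam • u := by
    funext y; simp [hulam y]
  have hlin : P ulam x = (1 - lam) * P (fun _ => 1) x + lam * P u x := by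
    rw [hfun]; simp [P.map_add, P.map_smul]
  obtain ⟨h0, h1⟩ := hlam
  have hpos : (0:ℝ) ≤ P ulam x := by
    rw [hlin, hP1, hPu]
    have hupow : (0:ℝ) ≤ (u x) ^ (((n : ℝ) + 4) / ((n : ℝ) - 4)) :=
      (Real.rpow_pos_of_pos (hu x) _).le
    have h1l : (0:ℝ) ≤ 1 - lam := by linarith
    exact add_nonneg (mul_nonneg h1l (mul_nonneg hc.le (hQ x)))
      (mul_nonneg h0 (mul_nonneg (mul_nonneg hc.le (hQtilde x)) hupow))
  have hppos : (0:ℝ) < (ulam x) ^ (((n : ℝ) + 4) / ((n : ℝ) - 4)) :=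
    Real.rpow_pos_of_pos (hulampos x) _
  have h := hPulam x
  nlinarith [mul_pos hc hppos]
end
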